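/- Let H be a finite-dimensional Hopf algebra with invertible antipode. The map F: H^* \to H^*, F(\varphi) = \varphi(a_i ? b_i) (where R = a_i \otimes b_i is an R-matrix for H) is a linear isomorphism with inverse F^{-1}(\varphi) = \varphi(S^{-1}(a_i) ? b_i). -/

import Mathlib

/-!
Apply `ψ ⊗ id` to the hexagon identity `(Δ ⊗ id)R = R₁₃R₂₃` for a linear `ψ : H ⊗ H → H`:
`∑ ψ(Δaᵢ) ⊗ bᵢ = ∑ ψ(aᵢ ⊗ aⱼ) ⊗ bᵢbⱼ`. For `ψ = ε ⊗ id` this says `(ε ⊗ id)(R) · R = R`, so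
`(ε ⊗ id)(R) = 1` since `R` is invertible. For `ψ(u ⊗ v) = v S⁻¹(u)` and `ψ(u ⊗ v) = S⁻¹(v) u`
the antipode axioms, pulled back through `S⁻¹`, give `ψ ∘ Δ = η ∘ ε`; hence
`∑ aⱼS⁻¹(aᵢ) ⊗ bᵢbⱼ = 1 = ∑ S⁻¹(aⱼ)aᵢ ⊗ bᵢbⱼ`, and these two identities say precisely that
`φ ↦ φ(aᵢ ? bᵢ)` and `φ ↦ φ(S⁻¹(aᵢ) ? bᵢ)` are inverse to each other.
-/

open scoped TensorProduct
open TensorProduct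

variable {k A : Type} [Field k] [Ring A] [HopfAlgebra k A]

/-- The linear map `x ↦ c x d` on `H`. -/
noncomputable def conjMap (c d : A) : A →ₗ[k] A :=
  (LinearMap.mulRight k d) ∘ₗ (LinearMap.mulLeft k c)

open Coalgebra HopfAlgebra

section QuasitriangularStructure

variable {R H : Type*} [CommSemiring R] [Semiring H] [Bialgebra R H] {ι : Type*} [Fintype ι]
  (a b : ι → H)

theorem sum_apply_comul_tmul_eq {M : Type*} [AddCommMonoid M] [Module R M]
    (hex1 : (∑ i, comul (R := R) (a i) ⊗ₜ[R] b i : (H ⊗[R] H) ⊗[R] H)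
        = (∑ i, (a i ⊗ₜ[R] (1 : H)) ⊗ₜ[R] b i) * (∑ i, ((1 : H) ⊗ₜ[R] a i) ⊗ₜ[R] b i))
    (ψ : H ⊗[R] H →ₗ[R] M) :
    ∑ i, ψ (comul (a i)) ⊗ₜ[R] b i = ∑ i, ∑ j, ψ (a i ⊗ₜ a j) ⊗ₜ[R] (b i * b j) := by
  simpa only [map_sum, map_tmul, LinearMap.id_coe, id_eq, Finset.sum_mul_sum,
    Algebra.TensorProduct.tmul_mul_tmul, mul_one, one_mul]
    using congrArg (map ψ LinearMap.id) hex1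

theorem sum_algebraMap_counit_tmul_eq_one
    (hex1 : (∑ i, comul (R := R) (a i) ⊗ₜ[R] b i : (H ⊗[R] H) ⊗[R] H)
        = (∑ i, (a i ⊗ₜ[R] (1 : H)) ⊗ₜ[R] b i) * (∑ i, ((1 : H) ⊗ₜ[R] a i) ⊗ₜ[R] b i))
    {r : H ⊗[R] H} (hr : (∑ i, a i ⊗ₜ[R] b i) * r = 1) :
    ∑ i, algebraMap R H (counit (a i)) ⊗ₜ[R] b i = 1 := by
  set u := ∑ i, algebraMap R H (counit (a i)) ⊗ₜ[R] b i
  have hR := sum_apply_comul_tmul_eq a b hex1 ((TensorProduct.lid R H).toLinearMap ∘ₗ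
    (counit (R := R) (A := H)).rTensor H)
  simp only [LinearMap.comp_apply, rTensor_counit_comul, LinearMap.rTensor_tmul,
    LinearEquiv.coe_coe, lid_tmul, one_smul] at hR
  have huR : u * ∑ i, a i ⊗ₜ[R] b i = ∑ i, a i ⊗ₜ[R] b i := by
    conv_rhs => rw [hR]
    simp only [u, Finset.sum_mul_sum, Algebra.TensorProduct.tmul_mul_tmul, ← Algebra.smul_def]
  calc u = u * ((∑ i, a i ⊗ₜ[R] b i) * r) := by rw [hr, mul_one]
    _ = 1 := by rw [← mul_assoc, huR, hr]

theorem sum_sum_tmul_mul_eq_one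
    (hex1 : (∑ i, comul (R := R) (a i) ⊗ₜ[R] b i : (H ⊗[R] H) ⊗[R] H)
        = (∑ i, (a i ⊗ₜ[R] (1 : H)) ⊗ₜ[R] b i) * (∑ i, ((1 : H) ⊗ₜ[R] a i) ⊗ₜ[R] b i))
    (hu : ∑ i, algebraMap R H (counit (a i)) ⊗ₜ[R] b i = 1)
    {ψ : H ⊗[R] H →ₗ[R] H} (hψ : ψ ∘ₗ comul = Algebra.linearMap R H ∘ₗ counit) :
    ∑ i, ∑ j, ψ (a i ⊗ₜ a j) ⊗ₜ[R] (b i * b j) = 1 := by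
  rw [← sum_apply_comul_tmul_eq a b hex1, ← hu]
  exact Finset.sum_congr rfl fun i _ => congrArg (· ⊗ₜ[R] b i) (LinearMap.congr_fun hψ (a i))

end QuasitriangularStructure

section InverseAntipode

variable {R H : Type*} [CommSemiring R] [Semiring H] [HopfAlgebra R H] {Sinv : H →ₗ[R] H}

theorem antipode_comp_mul'_comp_comm_comp_map (f g : H →ₗ[R] H) :
    antipode R ∘ₗ (LinearMap.mul' R H ∘ₗ (TensorProduct.comm R H H).toLinearMap ∘ₗ map f g) =
      LinearMap.mul' R H ∘ₗ map (antipode R ∘ₗ f) (antipode R ∘ₗ g) := by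
  rw [map_comp, ← LinearMap.comp_assoc (map f g) (map (antipode R) (antipode R)),
    ← antipode_comp_mul_comp_comm]
  simp only [LinearMap.comp_assoc]

theorem antipode_comp_algebraLinearMap :
    antipode R ∘ₗ Algebra.linearMap R H = Algebra.linearMap R H := by
  ext; simp

theorem mul'_comm_map_invAntipode_id_comp_comul (h₁ : Function.LeftInverse Sinv (antipode R))
    (h₂ : Function.RightInverse Sinv (antipode R)) :
    (LinearMap.mul' R H ∘ₗ (TensorProduct.comm R H H).toLinearMap ∘ₗ map Sinv LinearMap.id) ∘ₗ
      comul = Algebra.linearMap R H ∘ₗ counit := by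
  have key : antipode R ∘ₗ (LinearMap.mul' R H ∘ₗ (TensorProduct.comm R H H).toLinearMap ∘ₗ
      map Sinv LinearMap.id) ∘ₗ comul = antipode R ∘ₗ Algebra.linearMap R H ∘ₗ counit := by
    rw [← LinearMap.comp_assoc, antipode_comp_mul'_comp_comm_comp_map,
      show antipode R ∘ₗ Sinv = .id from LinearMap.ext h₂, LinearMap.comp_id,
      ← LinearMap.comp_assoc, antipode_comp_algebraLinearMap]
    exact mul_antipode_lTensor_comul
  exact LinearMap.ext fun x => h₁.injective (LinearMap.congr_fun key x)

theorem mul'_comm_map_id_invAntipode_comp_comul (h₁ : Function.LeftInverse Sinv (antipode R))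
    (h₂ : Function.RightInverse Sinv (antipode R)) :
    (LinearMap.mul' R H ∘ₗ (TensorProduct.comm R H H).toLinearMap ∘ₗ map LinearMap.id Sinv) ∘ₗ
      comul = Algebra.linearMap R H ∘ₗ counit := by
  have key : antipode R ∘ₗ (LinearMap.mul' R H ∘ₗ (TensorProduct.comm R H H).toLinearMap ∘ₗ
      map LinearMap.id Sinv) ∘ₗ comul = antipode R ∘ₗ Algebra.linearMap R H ∘ₗ counit := by
    rw [← LinearMap.comp_assoc, antipode_comp_mul'_comp_comm_comp_map,
      show antipode R ∘ₗ Sinv = .id from LinearMap.ext h₂, LinearMap.comp_id,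
      ← LinearMap.comp_assoc, antipode_comp_algebraLinearMap]
    exact mul_antipode_rTensor_comul
  exact LinearMap.ext fun x => h₁.injective (LinearMap.congr_fun key x)

end InverseAntipode

theorem sum_conjMap_apply_sum_conjMap_apply {ι κ : Type*} [Fintype ι] [Fintype κ]
    (c d : ι → A) (c' d' : κ → A) (h : ∑ i, ∑ j, (c' j * c i) ⊗ₜ[k] (d i * d' j) = 1) (x : A) :
    ∑ i, ∑ j, conjMap (k := k) (c' j) (d' j) (conjMap (k := k) (c i) (d i) x) = x := by
  have hx := congrArg (LinearMap.mul' k A ∘ₗ map (LinearMap.mulRight k x) LinearMap.id) h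
  simp only [map_sum, LinearMap.comp_apply, map_tmul, LinearMap.mul'_apply,
    LinearMap.mulRight_apply, LinearMap.id_coe, id_eq, Algebra.TensorProduct.one_def,
    mul_one, one_mul] at hx
  simpa only [conjMap, LinearMap.comp_apply, LinearMap.mulLeft_apply,
    LinearMap.mulRight_apply, mul_assoc] using hx

theorem leftInverse_sum_dualMap_conjMap {ι κ : Type*} [Fintype ι] [Fintype κ]
    (c d : ι → A) (c' d' : κ → A) (h : ∑ i, ∑ j, (c' j * c i) ⊗ₜ[k] (d i * d' j) = 1) :
    Function.LeftInverse
      (∑ i, (conjMap (k := k) (c i) (d i)).dualMap : Module.Dual k A →ₗ[k] Module.Dual k A)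
      (∑ j, (conjMap (k := k) (c' j) (d' j)).dualMap : Module.Dual k A →ₗ[k] Module.Dual k A) :=
    fun φ => by
  ext x
  conv_rhs => rw [← sum_conjMap_apply_sum_conjMap_apply c d c' d' h x]
  simp only [LinearMap.sum_apply, map_sum, LinearMap.dualMap_apply]
  exact Finset.sum_comm

theorem F_map_is_isomorphism_general
    (Sinv : A →ₗ[k] A)
    (hS1 : ∀ x : A, Sinv (HopfAlgebra.antipode (R := k) x) = x)
    (hS2 : ∀ x : A, HopfAlgebra.antipode (R := k) (Sinv x) = x)
    -- the R-matrix
    (ι : Type) [Fintype ι] (a b : ι → A)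
    (hex1 : (∑ i, (Coalgebra.comul (R := k) (a i)) ⊗ₜ[k] b i : (A ⊗[k] A) ⊗[k] A)
        = (∑ i, (a i ⊗ₜ[k] (1:A)) ⊗ₜ[k] b i) * (∑ i, ((1:A) ⊗ₜ[k] a i) ⊗ₜ[k] b i))
    -- `R⁻¹ = (S⁻¹ ⊗ id)(R)`
    (hRinv : (∑ i, a i ⊗ₜ[k] b i) * (∑ i, Sinv (a i) ⊗ₜ[k] b i) = 1) :
    (∀ φ : Module.Dual k A,
      (∑ i, (conjMap (k := k) (Sinv (a i)) (b i)).dualMap)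
        ((∑ i, (conjMap (k := k) (a i) (b i)).dualMap) φ) = φ)
    ∧ (∀ φ : Module.Dual k A,
      (∑ i, (conjMap (k := k) (a i) (b i)).dualMap)
        ((∑ i, (conjMap (k := k) (Sinv (a i)) (b i)).dualMap) φ) = φ)
    ∧ Function.Bijective (∑ i, (conjMap (k := k) (a i) (b i)).dualMap :
        Module.Dual k A →ₗ[k] Module.Dual k A) := by
  have hu := sum_algebraMap_counit_tmul_eq_one a b hex1 hRinv
  have hGF := leftInverse_sum_dualMap_conjMap (fun i => Sinv (a i)) b a b <| by
    simpa only [LinearMap.comp_apply, map_tmul, LinearEquiv.coe_coe, comm_tmul,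
      LinearMap.mul'_apply, LinearMap.id_apply] using sum_sum_tmul_mul_eq_one a b hex1 hu
      (mul'_comm_map_invAntipode_id_comp_comul hS1 hS2)
  have hFG := leftInverse_sum_dualMap_conjMap a b (fun i => Sinv (a i)) b <| by
    simpa only [LinearMap.comp_apply, map_tmul, LinearEquiv.coe_coe, comm_tmul,
      LinearMap.mul'_apply, LinearMap.id_apply] using sum_sum_tmul_mul_eq_one a b hex1 hu
      (mul'_comm_map_id_invAntipode_comp_comul hS1 hS2)
  exact ⟨hGF, hFG, hGF.injective, hFG.surjective⟩

/-- The map `F : H* → H*`, `F(φ) = φ(aᵢ ? bᵢ)`, is a linear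
isomorphism with inverse `F⁻¹(φ) = φ(S⁻¹(aᵢ) ? bᵢ)`. -/
theorem F_map_is_isomorphism
    [FiniteDimensional k A]
    (Sinv : A →ₗ[k] A)
    (hS1 : ∀ x : A, Sinv (HopfAlgebra.antipode (R := k) x) = x)
    (hS2 : ∀ x : A, HopfAlgebra.antipode (R := k) (Sinv x) = x)
    -- the R-matrix
    (ι : Type) [Fintype ι] (a b : ι → A)
    (hIntertwine : ∀ x : A, (∑ i, a i ⊗ₜ[k] b i) * Coalgebra.comul x
        = (TensorProduct.comm k A A) (Coalgebra.comul x) * (∑ i, a i ⊗ₜ[k] b i))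
    (hex1 : (∑ i, (Coalgebra.comul (R := k) (a i)) ⊗ₜ[k] b i : (A ⊗[k] A) ⊗[k] A)
        = (∑ i, (a i ⊗ₜ[k] (1:A)) ⊗ₜ[k] b i) * (∑ i, ((1:A) ⊗ₜ[k] a i) ⊗ₜ[k] b i))
    (hex2 : (∑ i, a i ⊗ₜ[k] (Coalgebra.comul (R := k) (b i)) : A ⊗[k] (A ⊗[k] A))
        = (∑ i, a i ⊗ₜ[k] ((1:A) ⊗ₜ[k] b i)) * (∑ i, a i ⊗ₜ[k] (b i ⊗ₜ[k] (1:A))))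
    -- `R⁻¹ = (S⁻¹ ⊗ id)(R)`
    (hRinv : (∑ i, a i ⊗ₜ[k] b i) * (∑ i, Sinv (a i) ⊗ₜ[k] b i) = 1)
    (hRinv' : (∑ i, Sinv (a i) ⊗ₜ[k] b i) * (∑ i, a i ⊗ₜ[k] b i) = 1) :
    (∀ φ : Module.Dual k A,
      (∑ i, (conjMap (k := k) (Sinv (a i)) (b i)).dualMap)
        ((∑ i, (conjMap (k := k) (a i) (b i)).dualMap) φ) = φ)
    ∧ (∀ φ : Module.Dual k A,
      (∑ i, (conjMap (k := k) (a i) (b i)).dualMap)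
        ((∑ i, (conjMap (k := k) (Sinv (a i)) (b i)).dualMap) φ) = φ)
    ∧ Function.Bijective (∑ i, (conjMap (k := k) (a i) (b i)).dualMap :
        Module.Dual k A →ₗ[k] Module.Dual k A) :=
  F_map_is_isomorphism_general Sinv hS1 hS2 ι a b hex1 hRinv
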